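/- Let α ∈ F^{r-1} lie in the lattice L(n) = {α : val(α_j) ≥ n(2^{r-1} - 2^{j-1})} and let u ∈ U(t₀ⁿ), i.e., u is upper unitriangular in GL_{r-1}(F) (embedded in the top-left corner of GL_r) with val(u_{i,j}) ≥ n(2^{j-1} - 2^{i-1}) for i < j ≤ r-1. Then the conjugate u·x(α)·u^{-1} lies in the principal congruence subgroup K(n) of GL_r(𝒪). -/
import Mathlib


open Matrix Finset

private lemma aux_sum {F : Type*} [Field F] (val : F → ℤ)
    (hval_add : ∀ x y : F, x ≠ 0 → y ≠ 0 → x + y ≠ 0 → min (val x) (val y) ≤ val (x + y))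
    {ι : Type*} (s : Finset ι) (f : ι → F) (P : Prop) (c : ℤ)
    (h : ∀ b ∈ s, f b = 0 ∨ (P ∧ c ≤ val (f b))) :
    (∑ b ∈ s, f b) = 0 ∨ (P ∧ c ≤ val (∑ b ∈ s, f b)) := by
  classical
  induction s using Finset.induction_on with
  | empty => left; simp
  | @insert a s' ha ih =>
    rw [Finset.sum_insert ha]
    have hfa := h a (Finset.mem_insert_self a s')
    have hrest := ih (fun b hb => h b (Finset.mem_insert_of_mem hb))
    by_cases ha0 : f a = 0
    · rw [ha0, zero_add]; exact hrest
    by_cases hs0 : (∑ b ∈ s', f b) = 0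
    · rw [hs0, add_zero]; exact Or.inr (hfa.resolve_left ha0)
    by_cases hz : f a + ∑ b ∈ s', f b = 0
    · exact Or.inl hz
    right
    obtain ⟨hP, h1⟩ := hfa.resolve_left ha0
    obtain ⟨_, h2⟩ := hrest.resolve_left hs0
    exact ⟨hP, le_trans (le_min h1 h2) (hval_add _ _ ha0 hs0 hz)⟩

/-- If `α ∈ L(n)` (i.e. `val(α_j) ≥ n(2^{r-1} - 2^{j-1})`) and `u ∈ U(t₀ⁿ)`, i.e. `u` is
upper unitriangular in the top-left `GL_{r-1}` block with
`val(u_{i,j}) ≥ n(2^{j-1} - 2^{i-1})` for `i < j ≤ r-1` (zero-based exponents `2^j, 2^i`),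
then `u ⬝ x(α) ⬝ u⁻¹` lies in the principal congruence subgroup `K(n)` of `GL_r(𝒪)`. -/
theorem stmt_2 (F : Type*) [Field F] (r n : ℕ) (hr : 2 ≤ r) (hn : 1 ≤ n)
    (val : F → ℤ) (ϖ : F) (hϖ0 : ϖ ≠ 0) (hϖval : val ϖ = 1)
    (hval_mul : ∀ x y : F, x ≠ 0 → y ≠ 0 → val (x * y) = val x + val y)
    (hval_add : ∀ x y : F, x ≠ 0 → y ≠ 0 → x + y ≠ 0 → min (val x) (val y) ≤ val (x + y))
    (α : ℕ → F)
    (hα : ∀ j, j < r - 1 → α j = 0 ∨ (n : ℤ) * (2 ^ (r - 1) - 2 ^ j) ≤ val (α j))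
    (x : Matrix (Fin r) (Fin r) F)
    (hx : ∀ i j : Fin r, x i j =
      if (i : ℕ) = r - 2 then
        (if (j : ℕ) = r - 1 then 0
         else if (j : ℕ) = r - 2 then α (r - 2) + 1
         else α (j : ℕ))
      else if i = j then 1 else 0)
    (u uinv : Matrix (Fin r) (Fin r) F)
    (hu_diag : ∀ i, u i i = 1)
    (hu_low : ∀ i j : Fin r, (j : ℕ) < (i : ℕ) → u i j = 0)
    (hu_block : ∀ i j : Fin r, i ≠ j → ((i : ℕ) = r - 1 ∨ (j : ℕ) = r - 1) → u i j = 0)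
    (hu_val : ∀ i j : Fin r, (i : ℕ) < (j : ℕ) → (j : ℕ) < r - 1 →
        u i j = 0 ∨ (n : ℤ) * (2 ^ (j : ℕ) - 2 ^ (i : ℕ)) ≤ val (u i j))
    (huinv : u * uinv = 1 ∧ uinv * u = 1) :
    (∀ i j, (u * x * uinv) i j = 0 ∨ 0 ≤ val ((u * x * uinv) i j)) ∧
    (∃ y : Matrix (Fin r) (Fin r) F,
        (∀ i j, y i j = 0 ∨ 0 ≤ val (y i j)) ∧ (u * x * uinv) * y = 1 ∧ y * (u * x * uinv) = 1) ∧
    (∀ i j : Fin r, (u * x * uinv) i j - (1 : Matrix (Fin r) (Fin r) F) i j = 0 ∨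
        (n : ℤ) ≤ val ((u * x * uinv) i j - (1 : Matrix (Fin r) (Fin r) F) i j)) := by
  classical
  -- basic valuation facts
  have hv1 : val 1 = 0 := by
    have h := hval_mul 1 1 one_ne_zero one_ne_zero
    rw [mul_one] at h; omega
  have hvm1 : val (-1 : F) = 0 := by
    have h := hval_mul (-1) (-1) (by norm_num) (by norm_num)
    rw [neg_mul_neg, one_mul, hv1] at h; omega
  have hvneg : ∀ t : F, t ≠ 0 → val (-t) = val t := by
    intro t ht
    have h := hval_mul (-1) t (by norm_num) ht
    rw [neg_one_mul, hvm1] at h; omega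
  have hPmul : ∀ (c d : ℤ) (a b : F), (a = 0 ∨ c ≤ val a) → (b = 0 ∨ d ≤ val b) →
      (a * b = 0 ∨ c + d ≤ val (a * b)) := by
    intro c d a b ha hb
    by_cases ha0 : a = 0
    · left; rw [ha0, zero_mul]
    by_cases hb0 : b = 0
    · left; rw [hb0, mul_zero]
    right
    rw [hval_mul a b ha0 hb0]
    exact add_le_add (ha.resolve_left ha0) (hb.resolve_left hb0)
  have hone_add : ∀ t : F, (t = 0 ∨ (n : ℤ) ≤ val t) → (1 + t ≠ 0 ∧ 0 ≤ val (1 + t)) := by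
    intro t ht
    by_cases ht0 : t = 0
    · simp [ht0, hv1]
    have htv := ht.resolve_left ht0
    have hne : 1 + t ≠ 0 := by
      intro h
      have hteq : t = -1 := by linear_combination h
      rw [hteq, hvm1] at htv
      omega
    refine ⟨hne, ?_⟩
    have hm := hval_add 1 t one_ne_zero ht0 hne
    rw [hv1] at hm
    have h2 : (0 : ℤ) ≤ min 0 (val t) := le_min le_rfl (by omega)
    exact le_trans h2 hm
  -- distinguished indices
  set p : Fin r := ⟨r - 2, by omega⟩ with hp
  set q : Fin r := ⟨r - 1, by omega⟩ with hq
  have hpv : (p : ℕ) = r - 2 := rfl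
  have hqv : (q : ℕ) = r - 1 := rfl
  have hpq : p ≠ q := by
    intro h
    have := congrArg Fin.val h
    rw [hpv, hqv] at this; omega
  -- the strictly upper triangular part
  set N : Matrix (Fin r) (Fin r) F := 1 - u with hNdef
  have hN : ∀ i j : Fin r, N i j = 0 ∨
      ((i : ℕ) < (j : ℕ) ∧ (j : ℕ) < r - 1 ∧
        (n : ℤ) * (2 ^ (j : ℕ) - 2 ^ (i : ℕ)) ≤ val (N i j)) := by
    intro i j
    have hNij : N i j = (if i = j then 1 else 0) - u i j := by
      rw [hNdef, Matrix.sub_apply, Matrix.one_apply]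
    by_cases hij : i = j
    · left; rw [hNij, if_pos hij, hij, hu_diag, sub_self]
    rw [hNij, if_neg hij, zero_sub]
    rcases lt_trichotomy (i : ℕ) (j : ℕ) with hlt | heq | hgt
    · by_cases hjr : (j : ℕ) = r - 1
      · left; rw [hu_block i j hij (Or.inr hjr), neg_zero]
      have hjlt : (j : ℕ) < r - 1 := by have := j.isLt; omega
      by_cases hu0 : u i j = 0
      · left; rw [hu0, neg_zero]
      · right
        refine ⟨hlt, hjlt, ?_⟩
        rw [hvneg _ hu0]
        exact (hu_val i j hlt hjlt).resolve_left hu0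
    · exact absurd (Fin.ext heq) hij
    · left; rw [hu_low i j hgt, neg_zero]
  have hpow : ∀ m : ℕ, 1 ≤ m → ∀ i j : Fin r, (N ^ m) i j = 0 ∨
      ((i : ℕ) + m ≤ (j : ℕ) ∧ (j : ℕ) < r - 1 ∧
        (n : ℤ) * (2 ^ (j : ℕ) - 2 ^ (i : ℕ)) ≤ val ((N ^ m) i j)) := by
    intro m
    induction m with
    | zero => omega
    | succ m ih =>
      intro _ i j
      by_cases hm : m = 0
      · subst hm
        rw [pow_one]
        rcases hN i j with h | ⟨h1, h2, h3⟩
        · exact Or.inl h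
        · exact Or.inr ⟨by omega, h2, h3⟩
      have hm1 : 1 ≤ m := by omega
      rw [pow_succ, Matrix.mul_apply]
      have key := aux_sum val hval_add Finset.univ (fun k => (N ^ m) i k * N k j)
        ((i : ℕ) + (m + 1) ≤ (j : ℕ) ∧ (j : ℕ) < r - 1)
        ((n : ℤ) * (2 ^ (j : ℕ) - 2 ^ (i : ℕ))) ?_
      · rcases key with h | ⟨⟨h1, h2⟩, h3⟩
        · exact Or.inl h
        · exact Or.inr ⟨h1, h2, h3⟩
      intro k _
      by_cases hz1 : (N ^ m) i k = 0
      · left; rw [hz1, zero_mul]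
      by_cases hz2 : N k j = 0
      · left; rw [hz2, mul_zero]
      obtain ⟨hik, _, hvk⟩ := (ih hm1 i k).resolve_left hz1
      obtain ⟨hkj, hjr, hvj⟩ := (hN k j).resolve_left hz2
      right
      refine ⟨⟨by omega, hjr⟩, ?_⟩
      rw [hval_mul _ _ hz1 hz2]
      have hsplit : (n : ℤ) * (2 ^ (j : ℕ) - 2 ^ (i : ℕ)) =
          (n : ℤ) * (2 ^ (k : ℕ) - 2 ^ (i : ℕ)) + (n : ℤ) * (2 ^ (j : ℕ) - 2 ^ (k : ℕ)) := by
        ring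
      rw [hsplit]
      exact add_le_add hvk hvj
  have hNr : N ^ r = 0 := by
    ext i j
    rcases hpow r (by omega) i j with h | ⟨h1, h2, _⟩
    · rw [h]; simp
    · exfalso; have := j.isLt; omega
  -- geometric series inverse
  set w : Matrix (Fin r) (Fin r) F := ∑ m ∈ Finset.range r, N ^ m with hwdef
  have hu_eq : u = 1 - N := by rw [hNdef, sub_sub_cancel]
  have huw : u * w = 1 := by
    have h := mul_geom_sum N r
    rw [hNr, zero_sub, ← hwdef] at h
    rw [hu_eq]
    calc (1 - N) * w = -((N - 1) * w) := by noncomm_ring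
      _ = 1 := by rw [h, neg_neg]
  have hwu : w * u = 1 := by
    have h := geom_sum_mul N r
    rw [hNr, zero_sub, ← hwdef] at h
    rw [hu_eq]
    calc w * (1 - N) = -(w * (N - 1)) := by noncomm_ring
      _ = 1 := by rw [h, neg_neg]
  have huinv_w : uinv = w := by
    calc uinv = uinv * (u * w) := by rw [huw, mul_one]
      _ = (uinv * u) * w := by rw [mul_assoc]
      _ = w := by rw [huinv.2, one_mul]
  have huinv_diag : ∀ j : Fin r, uinv j j = 1 := by
    intro j
    rw [huinv_w, hwdef, Matrix.sum_apply]
    rw [Finset.sum_eq_single 0]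
    · simp
    · intro m _ hm0
      rcases hpow m (by omega) j j with h | ⟨h1, _, _⟩
      · exact h
      · omega
    · intro h; exact absurd (Finset.mem_range.mpr (by omega)) h
  have huinv_bd : ∀ k j : Fin r, k ≠ j → uinv k j = 0 ∨
      ((k : ℕ) < (j : ℕ) ∧ (j : ℕ) < r - 1 ∧
        (n : ℤ) * (2 ^ (j : ℕ) - 2 ^ (k : ℕ)) ≤ val (uinv k j)) := by
    intro k j hkj
    rw [huinv_w, hwdef, Matrix.sum_apply]
    have key := aux_sum val hval_add (Finset.range r) (fun m => (N ^ m) k j)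
      ((k : ℕ) < (j : ℕ) ∧ (j : ℕ) < r - 1)
      ((n : ℤ) * (2 ^ (j : ℕ) - 2 ^ (k : ℕ))) ?_
    · rcases key with h | ⟨⟨h1, h2⟩, h3⟩
      · exact Or.inl h
      · exact Or.inr ⟨h1, h2, h3⟩
    intro m _
    by_cases hm0 : m = 0
    · left; subst hm0; rw [pow_zero, Matrix.one_apply_ne hkj]
    rcases hpow m (by omega) k j with h | ⟨h1, h2, h3⟩
    · exact Or.inl h
    · exact Or.inr ⟨⟨by omega, h2⟩, h3⟩
  -- the rank one perturbation
  set e : Fin r → F := fun b => if b = q then 0 else α (b : ℕ) with hedef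
  set E : Matrix (Fin r) (Fin r) F := Matrix.of (fun a b => if a = p then e b else 0) with hEdef
  have hEapply : ∀ a b : Fin r, E a b = if a = p then e b else 0 := fun a b => rfl
  have hxsplit : x = 1 + E := by
    ext a b
    rw [hx, Matrix.add_apply, Matrix.one_apply, hEapply]
    by_cases hap : (a : ℕ) = r - 2
    · have hap' : a = p := Fin.ext hap
      rw [if_pos hap, if_pos hap']
      by_cases hb1 : (b : ℕ) = r - 1
      · have hb' : b = q := Fin.ext hb1
        rw [if_pos hb1, hb', hedef]
        simp [hap', hpq]
      · rw [if_neg hb1]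
        have hbq : b ≠ q := fun h => hb1 (by rw [h])
        have heb : e b = α (b : ℕ) := by rw [hedef]; exact if_neg hbq
        by_cases hb2 : (b : ℕ) = r - 2
        · have hb2' : b = p := Fin.ext hb2
          rw [if_pos hb2, if_pos (by rw [hap', hb2'])]
          rw [heb, hb2]
          ring
        · have hab : a ≠ b := by
            intro h; exact hb2 (by rw [← h, hap])
          rw [if_neg hb2, if_neg hab, heb, zero_add]
    · rw [if_neg hap]
      have hap' : a ≠ p := fun h => hap (by rw [h])
      rw [if_neg hap', add_zero]
  set S : Fin r → F := fun j => ∑ b, e b * uinv b j with hSdef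
  have hgD : ∀ i j : Fin r, (u * x * uinv) i j =
      (1 : Matrix (Fin r) (Fin r) F) i j + u i p * S j := by
    intro i j
    have h1 : u * x * uinv = 1 + u * E * uinv := by
      rw [hxsplit, mul_add, mul_one, add_mul, huinv.1]
    rw [h1, Matrix.add_apply]
    congr 1
    rw [Matrix.mul_apply]
    have hUE : ∀ b : Fin r, (u * E) i b = u i p * e b := by
      intro b
      rw [Matrix.mul_apply]
      rw [Finset.sum_eq_single p]
      · rw [hEapply, if_pos rfl]
      · intro a _ hap; rw [hEapply, if_neg hap, mul_zero]
      · intro h; exact absurd (Finset.mem_univ p) h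
    calc ∑ k, (u * E) i k * uinv k j = ∑ k, u i p * (e k * uinv k j) := by
          apply Finset.sum_congr rfl
          intro k _
          rw [hUE k, mul_assoc]
      _ = u i p * S j := by rw [← Finset.mul_sum, hSdef]
  -- bound on the column u _ p
  have hup : ∀ i : Fin r, u i p = 0 ∨
      ((i : ℕ) ≤ r - 2 ∧ (n : ℤ) * (2 ^ (r - 2) - 2 ^ (i : ℕ)) ≤ val (u i p)) := by
    intro i
    rcases lt_trichotomy (i : ℕ) (r - 2) with hlt | heq | hgt
    · by_cases hu0 : u i p = 0
      · exact Or.inl hu0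
      · right
        refine ⟨by omega, ?_⟩
        have h := (hu_val i p (by rw [hpv]; exact hlt) (by rw [hpv]; omega)).resolve_left hu0
        rw [hpv] at h
        exact h
    · have hip : i = p := Fin.ext (by rw [heq, hpv])
      right
      refine ⟨by omega, ?_⟩
      rw [hip, hu_diag, hv1, hpv]
      simp
    · have hiq : (i : ℕ) = r - 1 := by have := i.isLt; omega
      have hipne : i ≠ p := by
        intro h; rw [h, hpv] at hiq; omega
      exact Or.inl (hu_block i p hipne (Or.inl hiq))
  have h2r : (2 : ℤ) ^ (r - 1) = 2 * 2 ^ (r - 2) := by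
    have hre : r - 1 = (r - 2) + 1 := by omega
    rw [hre, pow_succ]
    ring
  have h1n : (1 : ℤ) ≤ 2 ^ (r - 2) := (by simpa using pow_le_pow_right₀ (by norm_num : (1:ℤ) ≤ 2) (Nat.zero_le (r-2)))
  have hn1 : (1 : ℤ) ≤ (n : ℤ) := by exact_mod_cast hn
  -- the key bound on entries of the difference
  have hDbd : ∀ i j : Fin r, u i p * S j = 0 ∨ (n : ℤ) ≤ val (u i p * S j) := by
    intro i j
    rw [hSdef]
    dsimp only
    rw [Finset.mul_sum]
    have key := aux_sum val hval_add Finset.univ (fun b => u i p * (e b * uinv b j))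
      True (n : ℤ) ?_
    · rcases key with h | ⟨_, h⟩
      · exact Or.inl h
      · exact Or.inr h
    intro b _
    by_cases hbq : b = q
    · left
      rw [hedef]
      simp [hbq]
    have hbr : (b : ℕ) < r - 1 := by
      have h1 := b.isLt
      have h2 : (b : ℕ) ≠ r - 1 := fun h => hbq (Fin.ext (by rw [h, hqv]))
      omega
    have heb : e b = α (b : ℕ) := by rw [hedef]; exact if_neg hbq
    have huv : uinv b j = 0 ∨
        ((b : ℕ) ≤ (j : ℕ) ∧ (j : ℕ) < r - 1 ∧
          (n : ℤ) * (2 ^ (j : ℕ) - 2 ^ (b : ℕ)) ≤ val (uinv b j)) := by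
      by_cases hbj : b = j
      · right
        subst hbj
        rw [huinv_diag, hv1]
        exact ⟨le_rfl, hbr, by simp⟩
      · rcases huinv_bd b j hbj with h | ⟨h1, h2, h3⟩
        · exact Or.inl h
        · exact Or.inr ⟨le_of_lt h1, h2, h3⟩
    by_cases h1 : u i p = 0
    · left; rw [h1, zero_mul]
    by_cases h2 : α (b : ℕ) = 0
    · left; rw [heb, h2, zero_mul, mul_zero]
    by_cases h3 : uinv b j = 0
    · left; rw [h3, mul_zero, mul_zero]
    right
    refine ⟨trivial, ?_⟩
    obtain ⟨hile, hvu⟩ := (hup i).resolve_left h1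
    have hva := (hα (b : ℕ) hbr).resolve_left h2
    obtain ⟨hble, hjr, hvi⟩ := huv.resolve_left h3
    rw [heb]
    have hαu : α (b : ℕ) * uinv b j ≠ 0 := mul_ne_zero h2 h3
    rw [hval_mul _ _ h1 hαu, hval_mul _ _ h2 h3]
    have pb : (2 : ℤ) ^ (b : ℕ) ≤ 2 ^ (r - 2) :=
      pow_le_pow_right₀ (by norm_num) (by omega)
    have pi' : (2 : ℤ) ^ (i : ℕ) ≤ 2 ^ (r - 2) :=
      pow_le_pow_right₀ (by norm_num) (by omega)
    have pbj : (2 : ℤ) ^ (b : ℕ) ≤ 2 ^ (j : ℕ) :=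
      pow_le_pow_right₀ (by norm_num) hble
    have e1 : (0 : ℤ) ≤ (n : ℤ) * (2 ^ (r - 2) - 2 ^ (i : ℕ)) :=
      mul_nonneg (by positivity) (by linarith)
    have e3 : (0 : ℤ) ≤ (n : ℤ) * (2 ^ (j : ℕ) - 2 ^ (b : ℕ)) :=
      mul_nonneg (by positivity) (by linarith)
    have e2 : (n : ℤ) ≤ (n : ℤ) * (2 ^ (r - 1) - 2 ^ (b : ℕ)) := by
      have hone : (1 : ℤ) ≤ 2 ^ (r - 1) - 2 ^ (b : ℕ) := by rw [h2r]; linarith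
      calc (n : ℤ) = n * 1 := (mul_one _).symm
        _ ≤ _ := mul_le_mul_of_nonneg_left hone (by positivity)
    linarith
  -- negation helper
  have hnegd : ∀ t : F, (t = 0 ∨ (n : ℤ) ≤ val t) → (-t = 0 ∨ (n : ℤ) ≤ val (-t)) := by
    intro t ht
    by_cases h0 : t = 0
    · left; rw [h0, neg_zero]
    · right; rw [hvneg t h0]; exact ht.resolve_left h0
  -- goal 3
  have hG3 : ∀ i j : Fin r,
      (u * x * uinv) i j - (1 : Matrix (Fin r) (Fin r) F) i j = 0 ∨
        (n : ℤ) ≤ val ((u * x * uinv) i j - (1 : Matrix (Fin r) (Fin r) F) i j) := by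
    intro i j
    have h : (u * x * uinv) i j - (1 : Matrix (Fin r) (Fin r) F) i j = u i p * S j := by
      rw [hgD]; ring
    rw [h]
    exact hDbd i j
  -- goal 1
  have hG1 : ∀ i j : Fin r, (u * x * uinv) i j = 0 ∨ 0 ≤ val ((u * x * uinv) i j) := by
    intro i j
    rw [hgD i j]
    by_cases hij : i = j
    · subst hij
      rw [Matrix.one_apply_eq]
      exact Or.inr (hone_add _ (hDbd i i)).2
    · rw [Matrix.one_apply_ne hij, zero_add]
      rcases hDbd i j with h | h
      · exact Or.inl h
      · exact Or.inr (le_trans (by exact_mod_cast Nat.zero_le n) h)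
  -- goal 2 : construct the inverse
  set s' : F := α (r - 2) with hs'def
  have hsb : s' = 0 ∨ (n : ℤ) ≤ val s' := by
    rcases hα (r - 2) (by omega) with h | h
    · exact Or.inl h
    · right
      refine le_trans ?_ h
      have hone : (1 : ℤ) ≤ 2 ^ (r - 1) - 2 ^ (r - 2) := by rw [h2r]; linarith
      calc (n : ℤ) = n * 1 := (mul_one _).symm
        _ ≤ _ := mul_le_mul_of_nonneg_left hone (by positivity)
  obtain ⟨h1s, h1sge⟩ := hone_add s' hsb
  have hvs : val (1 + s') = 0 := by
    by_cases h0 : s' = 0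
    · rw [h0, add_zero, hv1]
    have hb := hsb.resolve_left h0
    have hsum : (1 + s') + (-s') = 1 := by ring
    have hm := hval_add (1 + s') (-s') h1s (neg_ne_zero.mpr h0)
      (by rw [hsum]; exact one_ne_zero)
    rw [hsum, hv1, hvneg _ h0] at hm
    rcases le_or_gt (val (1 + s')) (val s') with hc | hc
    · rw [min_eq_left hc] at hm; omega
    · rw [min_eq_right hc.le] at hm; omega
  set c : F := (1 + s')⁻¹ with hcdef
  have hcne : c ≠ 0 := inv_ne_zero h1s
  have hcmul : c * (1 + s') = 1 := inv_mul_cancel₀ h1s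
  have hcval : val c = 0 := by
    have h := hval_mul c (1 + s') hcne h1s
    rw [hcmul, hv1, hvs] at h
    omega
  set Dm : Matrix (Fin r) (Fin r) F := u * x * uinv - 1 with hDmdef
  have hDm_apply : ∀ i j : Fin r, Dm i j = u i p * S j := by
    intro i j
    rw [hDmdef, Matrix.sub_apply, hgD]
    ring
  have hssum : (∑ k, S k * u k p) = s' := by
    calc (∑ k, S k * u k p) = ∑ k, ∑ b, e b * uinv b k * u k p := by
          apply Finset.sum_congr rfl
          intro k _
          rw [hSdef]
          dsimp only
          rw [Finset.sum_mul]
      _ = ∑ b, ∑ k, e b * (uinv b k * u k p) := by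
          rw [Finset.sum_comm]
          apply Finset.sum_congr rfl
          intro b _
          apply Finset.sum_congr rfl
          intro k _
          ring
      _ = ∑ b, e b * (uinv * u) b p := by
          apply Finset.sum_congr rfl
          intro b _
          rw [Matrix.mul_apply, Finset.mul_sum]
      _ = ∑ b, e b * (1 : Matrix (Fin r) (Fin r) F) b p := by rw [huinv.2]
      _ = e p := by
          rw [Fintype.sum_eq_single p, Matrix.one_apply_eq, mul_one]
          intro b hbp
          rw [Matrix.one_apply_ne hbp, mul_zero]
      _ = s' := by rw [hedef]; dsimp only; rw [if_neg hpq]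
  have hDD : Dm * Dm = s' • Dm := by
    ext i j
    rw [Matrix.mul_apply, Matrix.smul_apply, smul_eq_mul]
    calc (∑ k, Dm i k * Dm k j) = ∑ k, (u i p * S j) * (S k * u k p) := by
          apply Finset.sum_congr rfl
          intro k _
          rw [hDm_apply i k, hDm_apply k j]
          ring
      _ = (u i p * S j) * ∑ k, S k * u k p := (Finset.mul_sum _ _ _).symm
      _ = s' * Dm i j := by rw [hssum, hDm_apply i j]; ring
  have hgDm : u * x * uinv = 1 + Dm := by rw [hDmdef]; abel
  have hcoef : (1 : F) - c - c * s' = 0 := by linear_combination -hcmul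
  have hmul1 : (1 + Dm) * ((1 : Matrix (Fin r) (Fin r) F) - c • Dm) = 1 := by
    have expand : (1 + Dm) * ((1 : Matrix (Fin r) (Fin r) F) - c • Dm) =
        1 + Dm - c • Dm - c • (Dm * Dm) := by
      simp only [mul_sub, sub_mul, add_mul, mul_add, one_mul, mul_one,
        Matrix.mul_smul, Matrix.smul_mul]
      abel
    rw [expand, hDD, smul_smul]
    have h2 : (1 : Matrix (Fin r) (Fin r) F) + Dm - c • Dm - (c * s') • Dm =
        1 + ((1 : F) - c - c * s') • Dm := by
      rw [sub_smul, sub_smul, one_smul]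
      abel
    rw [h2, hcoef, zero_smul, add_zero]
  have hmul2 : ((1 : Matrix (Fin r) (Fin r) F) - c • Dm) * (1 + Dm) = 1 := by
    have expand : ((1 : Matrix (Fin r) (Fin r) F) - c • Dm) * (1 + Dm) =
        1 + Dm - c • Dm - c • (Dm * Dm) := by
      simp only [mul_sub, sub_mul, add_mul, mul_add, one_mul, mul_one,
        Matrix.mul_smul, Matrix.smul_mul]
      abel
    rw [expand, hDD, smul_smul]
    have h2 : (1 : Matrix (Fin r) (Fin r) F) + Dm - c • Dm - (c * s') • Dm =
        1 + ((1 : F) - c - c * s') • Dm := by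
      rw [sub_smul, sub_smul, one_smul]
      abel
    rw [h2, hcoef, zero_smul, add_zero]
  refine ⟨hG1, ⟨(1 : Matrix (Fin r) (Fin r) F) - c • Dm, ?_, ?_, ?_⟩, hG3⟩
  · intro i j
    have happ : ((1 : Matrix (Fin r) (Fin r) F) - c • Dm) i j =
        (1 : Matrix (Fin r) (Fin r) F) i j + -(c * Dm i j) := by
      rw [Matrix.sub_apply, Matrix.smul_apply, smul_eq_mul]
      ring
    rw [happ]
    have ht : c * Dm i j = 0 ∨ (n : ℤ) ≤ val (c * Dm i j) := by
      have h := hPmul 0 (n : ℤ) c (Dm i j) (Or.inr (le_of_eq hcval.symm))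
        (by rw [hDm_apply]; exact hDbd i j)
      rw [zero_add] at h
      exact h
    have htn := hnegd _ ht
    by_cases hij : i = j
    · subst hij
      rw [Matrix.one_apply_eq]
      exact Or.inr (hone_add _ htn).2
    · rw [Matrix.one_apply_ne hij, zero_add]
      rcases htn with h | h
      · exact Or.inl h
      · exact Or.inr (le_trans (by exact_mod_cast Nat.zero_le n) h)
  · rw [hgDm]; exact hmul1
  · rw [hgDm]; exact hmul2
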